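/- (Spherical mean under cosine k-means.) Let v*, z₁, …, zₙ be vectors in ℝ^d with ‖v*‖ = ‖zᵢ‖ = 1 and ‖v* - zᵢ‖ ≤ ε for all i, where ε < √2. Let u = (1/n) Σᵢ zᵢ. Then u ≠ 0, and the normalized centroid v̂ = u/‖u‖ satisfies ‖v* - v̂‖ ≤ ε. -/

import Mathlib

open scoped RealInnerProductSpace

theorem spherical_mean_cosine_kmeans {d n : ℕ} (hn : 0 < n)
    (vstar : EuclideanSpace ℝ (Fin d)) (z : Fin n → EuclideanSpace ℝ (Fin d))
    (hv : ‖vstar‖ = 1) (hz : ∀ i, ‖z i‖ = 1)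
    (ε : ℝ) (hε0 : 0 ≤ ε) (hε : ε < Real.sqrt 2)
    (hclose : ∀ i, ‖vstar - z i‖ ≤ ε) :
    (n : ℝ)⁻¹ • (∑ i, z i) ≠ 0 ∧
      ‖vstar - ‖(n : ℝ)⁻¹ • (∑ i, z i)‖⁻¹ • ((n : ℝ)⁻¹ • (∑ i, z i))‖ ≤ ε := by
  set u := (n : ℝ)⁻¹ • (∑ i, z i) with hu
  have hn' : (0 : ℝ) < n := by exact_mod_cast hn
  have hpos : 0 < 1 - ε ^ 2 / 2 := by
    have h2 : Real.sqrt 2 ^ 2 = 2 := Real.sq_sqrt (by norm_num)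
    nlinarith
  have hip : ∀ i, 1 - ε ^ 2 / 2 ≤ ⟪vstar, z i⟫ := by
    intro i
    have h := norm_sub_sq_real vstar (z i)
    have hle : ‖vstar - z i‖ ^ 2 ≤ ε ^ 2 := by
      nlinarith [hclose i, norm_nonneg (vstar - z i)]
    nlinarith [hv, hz i]
  have hvu : 1 - ε ^ 2 / 2 ≤ ⟪vstar, u⟫ := by
    rw [hu, inner_smul_right, inner_sum]
    have : (n : ℝ) * (1 - ε ^ 2 / 2) ≤ ∑ i, ⟪vstar, z i⟫ := by
      calc (n : ℝ) * (1 - ε ^ 2 / 2) = ∑ _i : Fin n, (1 - ε ^ 2 / 2) := by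
            simp [Finset.sum_const, mul_comm]
            ring
        _ ≤ ∑ i, ⟪vstar, z i⟫ := Finset.sum_le_sum fun i _ => hip i
    have := mul_le_mul_of_nonneg_left this (le_of_lt (inv_pos.mpr hn'))
    calc 1 - ε ^ 2 / 2 = (n : ℝ)⁻¹ * ((n : ℝ) * (1 - ε ^ 2 / 2)) := by field_simp
      _ ≤ (n : ℝ)⁻¹ * ∑ i, ⟪vstar, z i⟫ := this
  have hune : u ≠ 0 := by
    intro h
    rw [h, inner_zero_right] at hvu
    linarith
  have hnu : ‖u‖ ≤ 1 := by
    rw [hu, norm_smul]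
    have : ‖∑ i, z i‖ ≤ (n : ℝ) := by
      calc ‖∑ i, z i‖ ≤ ∑ i, ‖z i‖ := norm_sum_le _ _
        _ = n := by simp [hz]
    calc ‖(n : ℝ)⁻¹‖ * ‖∑ i, z i‖ = (n : ℝ)⁻¹ * ‖∑ i, z i‖ := by
          rw [Real.norm_eq_abs, abs_of_nonneg (by positivity)]
      _ ≤ (n : ℝ)⁻¹ * n := by
          exact mul_le_mul_of_nonneg_left this (by positivity)
      _ = 1 := by field_simp
  have hnupos : 0 < ‖u‖ := norm_pos_iff.mpr hune
  refine ⟨hune, ?_⟩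
  have hvhat : 1 - ε ^ 2 / 2 ≤ ⟪vstar, ‖u‖⁻¹ • u⟫ := by
    rw [inner_smul_right]
    have h1 : (1:ℝ) ≤ ‖u‖⁻¹ := (one_le_inv₀ hnupos).mpr hnu
    nlinarith [mul_le_mul_of_nonneg_left hvu (le_of_lt (inv_pos.mpr hnupos))]
  have hnorm1 : ‖‖u‖⁻¹ • u‖ = 1 := norm_smul_inv_norm hune
  have h := norm_sub_sq_real vstar (‖u‖⁻¹ • u)
  rw [hv, hnorm1] at h
  have hsq : ‖vstar - ‖u‖⁻¹ • u‖ ^ 2 ≤ ε ^ 2 := by nlinarith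
  nlinarith [norm_nonneg (vstar - ‖u‖⁻¹ • u)]
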